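/- arXiv:1903.06317 — 2 statements merged into one kernel-verified Lean document; each statement's English description precedes it below -/
import Mathlib

section
/- The sequence a_n = ∑_{k=0}^{⌊n/2⌋} (1/2^{n-k}) C(n-k,k) converges to 2/3 as n → ∞. -/
/-!
Summing `C(i, j) x ^ i` over the whole antidiagonal `i + j = n` loses nothing, since
`C(n - k, k) = 0` for `k > n / 2`. Pascal's rule then gives `s (n + 2) = x * (s (n + 1) + s n)`;
for `x = 1 / 2` the roots of `t ^ 2 = (t + 1) / 2` are `1` and `-1 / 2`, so
`a n = 2 / 3 + (-1 / 2) ^ n / 3`.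
-/

open Finset

section ShortDiagonalSum

variable {R : Type*} [CommSemiring R]

def shortDiagonalSum (x : R) (n : ℕ) : R :=
  ∑ p ∈ antidiagonal n, (p.1.choose p.2 : R) * x ^ p.1

theorem shortDiagonalSum_add_two (x : R) (n : ℕ) :
    shortDiagonalSum x (n + 2) = x * (shortDiagonalSum x (n + 1) + shortDiagonalSum x n) := by
  simp only [shortDiagonalSum, Nat.antidiagonal_succ_succ', Nat.antidiagonal_succ', sum_cons,
    sum_map]
  simp [Nat.choose_succ_succ, add_mul, mul_add, pow_succ', sum_add_distrib, mul_sum]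
  simp only [mul_assoc, mul_comm, add_comm, add_left_comm]

theorem shortDiagonalSum_eq_sum_range (x : R) (n : ℕ) :
    shortDiagonalSum x n = ∑ k ∈ range (n / 2 + 1), ((n - k).choose k : R) * x ^ (n - k) := by
  rw [shortDiagonalSum, ← Nat.sum_antidiagonal_swap]
  simp only [Prod.fst_swap, Prod.snd_swap]
  rw [Nat.sum_antidiagonal_eq_sum_range_succ (fun i j => ((j.choose i : ℕ) : R) * x ^ j)]
  symm
  refine sum_subset (range_subset_range.2 (by omega)) fun k _ hk => ?_
  rw [Nat.choose_eq_zero_of_lt (by simp at hk; omega), Nat.cast_zero, zero_mul]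

end ShortDiagonalSum

theorem shortDiagonalSum_half (n : ℕ) :
    shortDiagonalSum (1 / 2 : ℝ) n = 2 / 3 + (-1 / 2) ^ n / 3 := by
  induction n using Nat.twoStepInduction with
  | zero => norm_num [shortDiagonalSum_eq_sum_range]
  | one => norm_num [shortDiagonalSum_eq_sum_range]
  | more n ih₀ ih₁ => rw [shortDiagonalSum_add_two, ih₀, ih₁]; ring

/-- The normalized short-diagonal sums of Pascal's triangle converge to `2/3`. -/
theorem short_diagonal_tendsto :
    Filter.Tendsto
      (fun n : ℕ => ∑ k ∈ Finset.range (n / 2 + 1), ((n - k).choose k : ℝ) / 2 ^ (n - k))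
      Filter.atTop (nhds (2 / 3)) := by
  have h_closed (n : ℕ) : ∑ k ∈ range (n / 2 + 1), ((n - k).choose k : ℝ) / 2 ^ (n - k)
      = 2 / 3 + (-1 / 2 : ℝ) ^ n / 3 := by
    rw [← shortDiagonalSum_half, shortDiagonalSum_eq_sum_range]
    simp only [div_eq_mul_inv, one_mul, inv_pow]
  have h_geom : Filter.Tendsto (fun n : ℕ => (-1 / 2 : ℝ) ^ n) Filter.atTop (nhds 0) :=
    tendsto_pow_atTop_nhds_zero_of_abs_lt_one (by norm_num [abs_div])
  simpa [h_closed] using (h_geom.div_const 3).const_add (2 / 3)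
end

section
/- For 0 < t < 1 and h > 0 with a = t/h and b = (1-t)/h, for every nonnegative integer n: ∑_{k≥0, 2k≤n} B_k^{n-k}(t;h) = ∫_0^1 x^{a-1}(1-x)^{b-1}/((1+x)B(a,b)) dx + (-1)^{n+2} ∫_0^1 x^{a+n}(1-x)^{b-1}/((1+x)B(a,b)) dx. -/
/-!
Put `a = t/h` and `b = (1-t)/h`. Factoring `h` out of every product and writing ascending
products as Gamma quotients gives `B_k^n(t;h) = C(n,k) B(a+k, b+n-k) / B(a,b)`, i.e. the
h-Bernstein basis is the classical Bernstein basis `b_{n,k}(x) = C(n,k) x^k (1-x)^(n-k)`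
averaged against the Beta density with parameters `a`, `b`. The sum in question thus
becomes the Beta average of the shallow-diagonal sum `Q_n = ∑_{i+j=n} b_{i,j}`. Pascal's
rule for Bernstein polynomials gives `Q_{n+2} = (1-x) Q_{n+1} + x Q_n`, the recurrence with
characteristic roots `1` and `-x`, so `(1+x) Q_n = 1 - (-x)^(n+1)`; averaging
`Q_n = (1 - (-x)^(n+1)) / (1+x)` gives the two integrals.
-/

/-- The h-Bernstein polynomial (Pólya–Eggenberger probability mass function). -/
noncomputable def hBernstein (n k : ℕ) (t h : ℝ) : ℝ :=
  (n.choose k : ℝ) *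
    ((∏ i ∈ Finset.range k, (t + i * h)) * ∏ i ∈ Finset.range (n - k), (1 - t + i * h)) /
    ∏ i ∈ Finset.range n, (1 + i * h)

open Finset Polynomial ProbabilityTheory

namespace bernsteinPolynomial

variable {R : Type*} [CommRing R]

theorem succ_succ (n ν : ℕ) :
    bernsteinPolynomial R (n + 1) (ν + 1) =
      X * bernsteinPolynomial R n ν + (1 - X) * bernsteinPolynomial R n (ν + 1) := by
  rcases lt_or_ge ν n with h | h
  · obtain ⟨d, rfl⟩ := Nat.exists_eq_add_of_lt h
    simp only [bernsteinPolynomial, Nat.choose_succ_succ', Nat.cast_add,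
      show ν + d + 1 + 1 - (ν + 1) = d + 1 by omega, show ν + d + 1 - ν = d + 1 by omega,
      show ν + d + 1 - (ν + 1) = d by omega]
    ring
  · rw [eq_zero_of_lt R (Nat.lt_succ_of_le h), bernsteinPolynomial, bernsteinPolynomial,
      Nat.choose_succ_succ', Nat.choose_eq_zero_of_lt (Nat.lt_succ_of_le h), add_zero,
      Nat.add_sub_add_right]
    ring

end bernsteinPolynomial

noncomputable def bernsteinDiagonalSum (R : Type*) [CommRing R] (n : ℕ) : R[X] :=
  ∑ p ∈ antidiagonal n, bernsteinPolynomial R p.1 p.2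

namespace bernsteinDiagonalSum

variable (R : Type*) [CommRing R]

theorem add_two (n : ℕ) :
    bernsteinDiagonalSum R (n + 2) =
      (1 - X) * bernsteinDiagonalSum R (n + 1) + X * bernsteinDiagonalSum R n := by
  set S : ℕ → R[X] := fun n ↦ ∑ p ∈ antidiagonal n, bernsteinPolynomial R p.1 (p.2 + 1)
  have succ_eq (m : ℕ) : bernsteinDiagonalSum R (m + 1) = (1 - X) ^ (m + 1) + S m := by
    simp [bernsteinDiagonalSum, Nat.sum_antidiagonal_succ', bernsteinPolynomial, S]
  have S_succ : S (n + 1) = X * bernsteinDiagonalSum R n + (1 - X) * S n := by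
    simp only [S, Nat.sum_antidiagonal_succ, bernsteinPolynomial.eq_zero_of_lt R (n + 1).succ_pos,
      zero_add, bernsteinPolynomial.succ_succ, sum_add_distrib, ← mul_sum, bernsteinDiagonalSum]
  rw [succ_eq (n + 1), S_succ, succ_eq]
  ring

theorem one_add_X_mul (n : ℕ) :
    (1 + X) * bernsteinDiagonalSum R n = 1 - (-X) ^ (n + 1) := by
  induction n using Nat.twoStepInduction with
  | zero => simp [bernsteinDiagonalSum, bernsteinPolynomial]
  | one =>
    simp [bernsteinDiagonalSum, Nat.sum_antidiagonal_succ, bernsteinPolynomial]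
    ring
  | more n ih₀ ih₁ =>
    rw [add_two, mul_add, mul_left_comm, ih₁, mul_left_comm, ih₀]
    ring

theorem eq_sum_range (n : ℕ) :
    bernsteinDiagonalSum R n = ∑ k ∈ range (n / 2 + 1), bernsteinPolynomial R (n - k) k := by
  rw [bernsteinDiagonalSum, ← Nat.sum_antidiagonal_swap]
  simp only [Prod.fst_swap, Prod.snd_swap]
  rw [Nat.sum_antidiagonal_eq_sum_range_succ (fun i j ↦ bernsteinPolynomial R j i)]
  refine (sum_subset (range_subset_range.2 (by omega)) fun k hk hk' ↦ ?_).symm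
  simp only [mem_range] at hk hk'
  exact bernsteinPolynomial.eq_zero_of_lt R (by omega)

theorem eval_eq_div {K : Type*} [Field K] (n : ℕ) {x : K} (hx : 1 + x ≠ 0) :
    (bernsteinDiagonalSum K n).eval x = (1 - (-x) ^ (n + 1)) / (1 + x) := by
  rw [eq_div_iff hx, mul_comm]
  simpa using congrArg (eval x) (one_add_X_mul K n)

end bernsteinDiagonalSum

theorem Real.Gamma_add_nat_eq_mul_prod {a : ℝ} {k : ℕ} (ha : ∀ i < k, a + i ≠ 0) :
    Gamma (a + k) = Gamma a * ∏ i ∈ range k, (a + i) := by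
  induction k with
  | zero => simp
  | succ k ih =>
    rw [prod_range_succ, ← mul_assoc, ← ih fun i hi ↦ ha i (by omega), Nat.cast_succ,
      ← add_assoc, Gamma_add_one (ha k k.lt_succ_self), mul_comm]

theorem prod_range_mul_add_nat_mul_eq_pow_mul_Gamma_div {a : ℝ} (ha : 0 < a) (h : ℝ) (k : ℕ) :
    ∏ i ∈ range k, (a * h + i * h) = h ^ k * (Real.Gamma (a + k) / Real.Gamma a) := by
  rw [Real.Gamma_add_nat_eq_mul_prod fun i _ ↦ by positivity,
    mul_div_cancel_left₀ _ (Real.Gamma_pos_of_pos ha).ne']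
  simp_rw [← add_mul, prod_mul_distrib, prod_const, card_range, mul_comm]

theorem hBernstein_eq_choose_mul_beta_div_beta {t h : ℝ} (hh : 0 < h) (h0 : 0 < t) (ht : t < 1)
    (n k : ℕ) :
    hBernstein n k t h =
      n.choose k * beta (t / h + k) ((1 - t) / h + (n - k : ℕ)) / beta (t / h) ((1 - t) / h) := by
  rcases lt_or_ge n k with hnk | hkn
  · simp [hBernstein, Nat.choose_eq_zero_of_lt hnk]
  set a := t / h
  set b := (1 - t) / h
  have ha : 0 < a := div_pos h0 hh
  have hb : 0 < b := div_pos (sub_pos.2 ht) hh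
  have htb : 1 - t = b * h := (div_mul_cancel₀ _ hh.ne').symm
  have hta : t = a * h := (div_mul_cancel₀ _ hh.ne').symm
  have hab : (1 : ℝ) = (a + b) * h := by rw [add_mul, ← hta, ← htb]; ring
  have hsum : a + k + (b + (n - k : ℕ)) = a + b + n := by push_cast [hkn]; ring
  rw [hBernstein, htb, hta, hab, prod_range_mul_add_nat_mul_eq_pow_mul_Gamma_div ha,
    prod_range_mul_add_nat_mul_eq_pow_mul_Gamma_div hb,
    prod_range_mul_add_nat_mul_eq_pow_mul_Gamma_div (add_pos ha hb), beta, beta, hsum,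
    ← pow_mul_pow_sub h hkn]
  field_simp

theorem integral_rpow_mul_one_sub_rpow_eq_beta {a b : ℝ} (ha : 0 < a) (hb : 0 < b) :
    ∫ x in (0 : ℝ)..1, x ^ (a - 1) * (1 - x) ^ (b - 1) = beta a b := by
  have hcast : Complex.betaIntegral a b =
      ↑(∫ x in (0 : ℝ)..1, x ^ (a - 1) * (1 - x) ^ (b - 1)) := by
    rw [Complex.betaIntegral, ← intervalIntegral.integral_ofReal]
    refine intervalIntegral.integral_congr fun x hx ↦ ?_
    rw [Set.uIcc_of_le zero_le_one] at hx
    simp [Complex.ofReal_cpow hx.1, Complex.ofReal_cpow (sub_nonneg.2 hx.2)]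
  rw [beta_eq_betaIntegralReal a b ha hb, hcast, Complex.ofReal_re]

theorem intervalIntegrable_rpow_mul_one_sub_rpow {a b : ℝ} (ha : 0 < a) (hb : 0 < b) :
    IntervalIntegrable (fun x ↦ x ^ (a - 1) * (1 - x) ^ (b - 1)) MeasureTheory.volume 0 1 := by
  by_contra h
  have := intervalIntegral.integral_undef h
  rw [integral_rpow_mul_one_sub_rpow_eq_beta ha hb] at this
  exact (beta_pos ha hb).ne' this

theorem integral_rpow_mul_one_sub_rpow_mul_pow_mul_pow_eq_beta {a b : ℝ} (ha : 0 < a)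
    (hb : 0 < b) (k m : ℕ) :
    ∫ x in (0 : ℝ)..1, x ^ (a - 1) * (1 - x) ^ (b - 1) * (x ^ k * (1 - x) ^ m) =
      beta (a + k) (b + m) := by
  rw [← integral_rpow_mul_one_sub_rpow_eq_beta (by positivity) (by positivity)]
  refine intervalIntegral.integral_congr_Ioo_of_le zero_le_one fun x hx ↦ ?_
  rw [add_sub_right_comm a, add_sub_right_comm b, Real.rpow_add_natCast hx.1.ne',
    Real.rpow_add_natCast (sub_pos.2 hx.2).ne']
  ring

theorem hBernstein_eq_integral_bernsteinPolynomial {t h : ℝ} (hh : 0 < h) (h0 : 0 < t)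
    (ht : t < 1) (n k : ℕ) :
    hBernstein n k t h =
      (∫ x in (0 : ℝ)..1,
        x ^ (t / h - 1) * (1 - x) ^ ((1 - t) / h - 1) * (bernsteinPolynomial ℝ n k).eval x) /
        beta (t / h) ((1 - t) / h) := by
  rw [hBernstein_eq_choose_mul_beta_div_beta hh h0 ht,
    ← integral_rpow_mul_one_sub_rpow_mul_pow_mul_pow_eq_beta (div_pos h0 hh)
      (div_pos (sub_pos.2 ht) hh),
    ← intervalIntegral.integral_const_mul]
  congr 2 with x
  simp only [bernsteinPolynomial, eval_mul, eval_natCast, eval_pow, eval_X, eval_sub, eval_one]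
  ring

theorem sum_hBernstein_eq_integral_bernsteinDiagonalSum {t h : ℝ} (hh : 0 < h) (h0 : 0 < t)
    (ht : t < 1) (n : ℕ) :
    ∑ k ∈ range (n / 2 + 1), hBernstein (n - k) k t h =
      (∫ x in (0 : ℝ)..1, x ^ (t / h - 1) * (1 - x) ^ ((1 - t) / h - 1) *
        (bernsteinDiagonalSum ℝ n).eval x) / beta (t / h) ((1 - t) / h) := by
  have hw := intervalIntegrable_rpow_mul_one_sub_rpow (div_pos h0 hh) (div_pos (sub_pos.2 ht) hh)
  simp_rw [hBernstein_eq_integral_bernsteinPolynomial hh h0 ht, ← sum_div,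
    ← intervalIntegral.integral_finsetSum fun k _ ↦
      hw.mul_continuousOn (Polynomial.continuousOn _),
    ← mul_sum, ← eval_finsetSum, bernsteinDiagonalSum.eq_sum_range]

/-- For `0 < t < 1`, `h > 0`, `a = t/h`, `b = (1-t)/h` and every `n`:
`∑_{2k ≤ n} B_k^{n-k}(t;h)
  = ∫_0^1 x^{a-1}(1-x)^{b-1}/((1+x)B(a,b)) dx + (-1)^{n+2} ∫_0^1 x^{a+n}(1-x)^{b-1}/((1+x)B(a,b)) dx`. -/
theorem hBernstein_short_diagonal_sum (t h : ℝ) (hh : 0 < h) (h0 : 0 < t) (ht : t < 1)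
    (n : ℕ) (a b : ℝ) (ha : a = t / h) (hb : b = (1 - t) / h) :
    ∑ k ∈ Finset.range (n / 2 + 1), hBernstein (n - k) k t h =
      (∫ x in (0 : ℝ)..1,
          x ^ (a - 1) * (1 - x) ^ (b - 1) /
            ((1 + x) * ∫ y in (0 : ℝ)..1, y ^ (a - 1) * (1 - y) ^ (b - 1))) +
      (-1 : ℝ) ^ (n + 2) *
        ∫ x in (0 : ℝ)..1,
          x ^ (a + n) * (1 - x) ^ (b - 1) /
            ((1 + x) * ∫ y in (0 : ℝ)..1, y ^ (a - 1) * (1 - y) ^ (b - 1)) := by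
  have ha₀ : 0 < a := ha ▸ div_pos h0 hh
  have hb₀ : 0 < b := hb ▸ div_pos (sub_pos.2 ht) hh
  have hcont : ContinuousOn (fun x : ℝ ↦ ((1 + x) * beta a b)⁻¹) (Set.uIcc 0 1) := by
    refine ContinuousOn.inv₀ (by fun_prop) fun x hx ↦ ?_
    rw [Set.uIcc_of_le zero_le_one] at hx
    exact (mul_pos (by linarith [hx.1]) (beta_pos ha₀ hb₀)).ne'
  have hw₁ := (intervalIntegrable_rpow_mul_one_sub_rpow ha₀ hb₀).mul_continuousOn hcont
  have hw₂ := (intervalIntegrable_rpow_mul_one_sub_rpow (a := a + n + 1) (by positivity)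
    hb₀).mul_continuousOn hcont
  simp only [← div_eq_mul_inv, add_sub_cancel_right] at hw₁ hw₂
  rw [sum_hBernstein_eq_integral_bernsteinDiagonalSum hh h0 ht, ← ha, ← hb,
    integral_rpow_mul_one_sub_rpow_eq_beta ha₀ hb₀, ← intervalIntegral.integral_const_mul,
    ← intervalIntegral.integral_add hw₁ (hw₂.const_mul _), ← intervalIntegral.integral_div]
  refine intervalIntegral.integral_congr_Ioo_of_le zero_le_one fun x hx ↦ ?_
  have hx₁ : 1 + x ≠ 0 := by linarith [hx.1]
  rw [bernsteinDiagonalSum.eval_eq_div n hx₁,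
    show a + n = a - 1 + (n + 1 : ℕ) by push_cast; ring, Real.rpow_add_natCast hx.1.ne']
  field_simp
  ring
end
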